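/- With the data below, define w(t, i) := (exp((T − t)·A)·𝟏)_i, which is strictly positive for t ∈ [0, T], and v(t, i, c) := c + (1/k)·log w(t, i). Fix t ∈ [0, T] and c ∈ ℝ. Then: (a) for every i ∈ {0, …, 2N−1}, the function p ↦ exp(−k·p·Z⁺_i·Δ⁺_i)·( v(t, i+1, c + p·Z⁺_i·Δ⁺_i) − v(t, i, c) ) on ℝ attains its greatest value at the point p*(t, i) := (1/(k·Z⁺_i·Δ⁺_i))·( 1 + log( w(t, i) / w(t, i+1) ) ), and this maximizer is unique; and (b) for every i ∈ {1, …, 2N}, the function m ↦ exp(−k·m·Z⁻_i·Δ⁻_i)·( v(t, i−1, c + m·Z⁻_i·Δ⁻_i) − v(t, i, c) ) on ℝ attains its greatest value at the point m*(t, i) := (1/(k·Z⁻_i·Δ⁻_i))·( 1 + log( w(t, i) / w(t, i−1) ) ), and this maximizer is unique. -/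

import Mathlib

/-!
With `u = k Z Δ p + log (w_{i±1} / w_i)`, the fee objective equals
`(w_{i±1} / (k w_i)) · u e^{-u}`, and `u e^{-u}` has the unique maximizer `u = 1`; the formula
for the optimal fee is `u = 1` solved for `p`.

Positivity of `w`: off the diagonal `A` is nonnegative, so `(T - t) A + c` is entrywise
nonnegative for large `c`; the exponential of a nonnegative matrix dominates the identity
entrywise, hence `exp ((T - t) A) 𝟏 = e^{-c} exp ((T - t) A + c) 𝟏 ≥ e^{-c}`.
-/

open Real

theorem mul_exp_neg_lt_exp_neg_one {y : ℝ} (hy : y ≠ 1) : y * exp (-y) < exp (-1) := by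
  have h : y < exp (y - 1) := by
    simpa using add_one_lt_exp (x := y - 1) (sub_ne_zero.2 hy)
  calc y * exp (-y) < exp (y - 1) * exp (-y) := by gcongr
    _ = exp (-1) := by rw [← exp_add]; ring_nf

theorem fee_objective_unique_max {k z d c y y' p₀ : ℝ} (hk : 0 < k) (hz : z ≠ 0) (hd : d ≠ 0)
    (hy : y ≠ 0) (hy' : y' ≠ 0) {G : ℝ → ℝ}
    (hG : ∀ p, G p = exp (-(k * p * z * d)) *
      (c + p * z * d + 1 / k * log y' - (c + 1 / k * log y)))
    (hp₀ : p₀ = 1 / (k * z * d) * (1 + log (y / y'))) :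
    (∀ p, G p ≤ G p₀) ∧ (∀ p, p ≠ p₀ → G p < G p₀) := by
  set L := log y' - log y
  set u : ℝ → ℝ := fun p => k * z * d * p + L
  have hG_eq : ∀ p, G p = exp L / k * (u p * exp (-u p)) := by
    intro p
    rw [hG, show -(k * p * z * d) = -u p + L by ring, exp_add]
    field_simp
    ring
  have hu₀ : u p₀ = 1 := by
    simp only [u, L, hp₀, log_div hy hy']
    field_simp
    ring
  have hscale : 0 < exp L / k := by positivity
  refine ⟨fun p => ?_, fun p hp => ?_⟩
  · rw [hG_eq, hG_eq, hu₀, one_mul]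
    exact mul_le_mul_of_nonneg_left (mul_exp_neg_le_exp_neg_one _) hscale.le
  · have hup : u p ≠ 1 := by
      rw [← hu₀]
      intro h
      exact hp (mul_left_cancel₀ (by positivity) (add_right_cancel h))
    rw [hG_eq, hG_eq, hu₀, one_mul]
    exact mul_lt_mul_of_pos_left (mul_exp_neg_lt_exp_neg_one hup) hscale

namespace Matrix

variable {n : Type*} [Fintype n] [DecidableEq n]

theorem one_apply_le_exp_apply_of_nonneg {B : Matrix n n ℝ} (hB : ∀ i j, 0 ≤ B i j) (i j : n) :
    (1 : Matrix n n ℝ) i j ≤ NormedSpace.exp B i j := by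
  let := Matrix.linftyOpNormedRing (n := n) (α := ℝ)
  let := Matrix.linftyOpNormedAlgebra (n := n) (R := ℝ) (α := ℝ)
  have hsum : HasSum (fun k => ((Nat.factorial k : ℝ)⁻¹ • B ^ k) i j) (NormedSpace.exp B i j) :=
    Pi.hasSum.1 (Pi.hasSum.1 (NormedSpace.exp_series_hasSum_exp' (𝕂 := ℝ) B) i) j
  simpa using le_hasSum hsum 0 fun k _ => mul_nonneg (by positivity) (pow_apply_nonneg hB k i j)

theorem one_le_exp_mulVec_one_of_nonneg {B : Matrix n n ℝ} (hB : ∀ i j, 0 ≤ B i j) (i : n) :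
    1 ≤ (NormedSpace.exp B *ᵥ 1) i := by
  have hentry := one_apply_le_exp_apply_of_nonneg hB i
  calc (1 : ℝ) ≤ NormedSpace.exp B i i := by simpa using hentry i
    _ ≤ ∑ j, NormedSpace.exp B i j :=
      Finset.single_le_sum
        (fun j _ => (hentry j).trans' (by by_cases h : i = j <;> simp [one_apply, h]))
        (Finset.mem_univ i)
    _ = (NormedSpace.exp B *ᵥ 1) i := by simp [mulVec, dotProduct]

theorem exp_mulVec_one_pos_of_nonneg_offDiag {M : Matrix n n ℝ} (hM : ∀ i j, i ≠ j → 0 ≤ M i j)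
    (i : n) :
    0 < (NormedSpace.exp M *ᵥ 1) i := by
  set c := ∑ j, |M j j|
  have hshift : ∀ i j, 0 ≤ (M + c • (1 : Matrix n n ℝ)) i j := by
    intro i j
    rcases eq_or_ne i j with rfl | hij
    · have : |M i i| ≤ c := Finset.single_le_sum (f := fun j => |M j j|)
        (fun j _ => abs_nonneg _) (Finset.mem_univ i)
      simp only [add_apply, smul_apply, one_apply_eq, smul_eq_mul, mul_one]
      linarith [neg_abs_le (M i i)]
    · simpa [one_apply_ne hij] using hM i j hij
  have hscalar : NormedSpace.exp ((-c) • (1 : Matrix n n ℝ)) = Real.exp (-c) • 1 := by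
    rw [smul_one_eq_diagonal, exp_diagonal, smul_one_eq_diagonal, Pi.exp_def, Real.exp_eq_exp_ℝ]
  have hexp : NormedSpace.exp M = Real.exp (-c) • NormedSpace.exp (M + c • 1) := by
    rw [← mul_smul_one, ← hscalar,
      ← exp_add_of_commute _ _ ((Commute.one_right _).smul_right _)]
    congr 1
    module
  rw [hexp, smul_mulVec, Pi.smul_apply, smul_eq_mul]
  exact mul_pos (Real.exp_pos _) (one_pos.trans_le (one_le_exp_mulVec_one_of_nonneg hshift i))

end Matrix

/-- The optimal dynamic selling and buying fees of the AMM in the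
constant-oracle-price regime: `p*(t,i)` and `m*(t,i)` are the unique maximizers of
the respective terms of the HJB equation. -/
theorem stmt7 (N : ℕ)
    (Δp Δm Zp Zm P : Fin (2 * N + 1) → ℝ)
    (hΔp : ∀ i : Fin (2 * N + 1), (i : ℕ) < 2 * N → 0 < Δp i)
    (hΔm : ∀ i : Fin (2 * N + 1), 0 < (i : ℕ) → 0 < Δm i)
    (hZp : ∀ i : Fin (2 * N + 1), (i : ℕ) < 2 * N → 0 < Zp i)
    (hZm : ∀ i : Fin (2 * N + 1), 0 < (i : ℕ) → 0 < Zm i)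
    (lp lm k s T : ℝ) (hlp : 0 < lp) (hlm : 0 < lm) (hk : 0 < k)
    (A : Matrix (Fin (2 * N + 1)) (Fin (2 * N + 1)) ℝ)
    (hA : ∀ i j : Fin (2 * N + 1), A i j =
      if (j : ℕ) = (i : ℕ) then -(k * P i)
      else if (j : ℕ) = (i : ℕ) + 1 then
        lp * Real.exp (-(k * s * Δp i) - 1) * Real.exp (k * Zp i * Δp i)
      else if (j : ℕ) + 1 = (i : ℕ) then
        lm * Real.exp (k * s * Δm i - 1) * Real.exp (-(k * Zm i * Δm i))
      else 0)
    (w : ℝ → Fin (2 * N + 1) → ℝ)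
    (hw : ∀ t : ℝ, w t = (NormedSpace.exp ((T - t) • A)).mulVec 1)
    (v : ℝ → Fin (2 * N + 1) → ℝ → ℝ)
    (hv : ∀ t : ℝ, ∀ i : Fin (2 * N + 1), ∀ c : ℝ,
      v t i c = c + (1 / k) * Real.log (w t i))
    (t : ℝ) (ht : t ∈ Set.Icc (0 : ℝ) T) (c : ℝ)
    -- the selling-fee objective `Gp i` and the optimal selling fee `pstar i`
    (Gp : Fin (2 * N + 1) → ℝ → ℝ)
    (hGp : ∀ i : Fin (2 * N + 1), ∀ h : (i : ℕ) < 2 * N, ∀ p : ℝ,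
      Gp i p = Real.exp (-(k * p * Zp i * Δp i)) *
        (v t ⟨(i : ℕ) + 1, by omega⟩ (c + p * Zp i * Δp i) - v t i c))
    (pstar : Fin (2 * N + 1) → ℝ)
    (hpstar : ∀ i : Fin (2 * N + 1), ∀ h : (i : ℕ) < 2 * N,
      pstar i = (1 / (k * Zp i * Δp i)) *
        (1 + Real.log (w t i / w t ⟨(i : ℕ) + 1, by omega⟩)))
    -- the buying-fee objective `Gm i` and the optimal buying fee `mstar i`
    (Gm : Fin (2 * N + 1) → ℝ → ℝ)
    (hGm : ∀ i : Fin (2 * N + 1), ∀ h : 0 < (i : ℕ), ∀ m : ℝ,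
      Gm i m = Real.exp (-(k * m * Zm i * Δm i)) *
        (v t ⟨(i : ℕ) - 1, by omega⟩ (c + m * Zm i * Δm i) - v t i c))
    (mstar : Fin (2 * N + 1) → ℝ)
    (hmstar : ∀ i : Fin (2 * N + 1), ∀ h : 0 < (i : ℕ),
      mstar i = (1 / (k * Zm i * Δm i)) *
        (1 + Real.log (w t i / w t ⟨(i : ℕ) - 1, by omega⟩))) :
    -- `w` is strictly positive at time `t ∈ [0, T]`
    (∀ i : Fin (2 * N + 1), 0 < w t i) ∧
    -- (a) `pstar i` is the unique maximizer of `Gp i`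
    (∀ i : Fin (2 * N + 1), (i : ℕ) < 2 * N →
      (∀ p : ℝ, Gp i p ≤ Gp i (pstar i)) ∧
      (∀ p : ℝ, p ≠ pstar i → Gp i p < Gp i (pstar i))) ∧
    -- (b) `mstar i` is the unique maximizer of `Gm i`
    (∀ i : Fin (2 * N + 1), 0 < (i : ℕ) →
      (∀ m : ℝ, Gm i m ≤ Gm i (mstar i)) ∧
      (∀ m : ℝ, m ≠ mstar i → Gm i m < Gm i (mstar i))) := by
  have hA_offDiag : ∀ i j, i ≠ j → 0 ≤ A i j := by
    intro i j hij
    rw [hA, if_neg fun h => hij (Fin.ext h.symm)]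
    split_ifs <;> positivity
  have hwpos : ∀ i, 0 < w t i := by
    intro i
    rw [hw]
    refine Matrix.exp_mulVec_one_pos_of_nonneg_offDiag (fun i j hij => ?_) i
    exact mul_nonneg (sub_nonneg.2 ht.2) (hA_offDiag i j hij)
  refine ⟨hwpos, fun i hi => ?_, fun i hi => ?_⟩
  · exact fee_objective_unique_max hk (hZp i hi).ne' (hΔp i hi).ne' (hwpos _).ne' (hwpos _).ne'
      (fun p => by rw [hGp i hi, hv, hv]) (hpstar i hi)
  · exact fee_objective_unique_max hk (hZm i hi).ne' (hΔm i hi).ne' (hwpos _).ne' (hwpos _).ne'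
      (fun m => by rw [hGm i hi, hv, hv]) (hmstar i hi)
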